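/- Let p ≥ 1 and 0 < γ < 1, let a, b : [0,∞) → ℝ be nonnegative nondecreasing continuous functions, and let l be a nonnegative function continuous on (0,∞) and locally integrable on [0,∞). If u is a continuous nonnegative function on [0,∞) satisfying u(t) ≤ a(t) + b(t)(∫₀ᵗ l(s) u(s)^{pγ} ds)^{1/p} for all t ∈ [0,∞), then u(t) ≤ 2^{1-1/p} (a(t)^{p(1-γ)} + (1-γ) 2^{(p-1)γ} b(t)^p ∫₀ᵗ l(s) ds)^{1/(p(1-γ))} for all t ∈ [0,∞). -/

import Mathlib

/-!
Raising the hypothesis to the power `p` with `(x + y) ^ p ≤ 2 ^ (p - 1) * (x ^ p + y ^ p)` and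
using that `a`, `b` are nondecreasing gives `u ^ p ≤ z` on `[0, T]`, where
`z s = A + B * ∫₀ˢ l * u ^ (p * γ)` with `A = 2 ^ (p - 1) * a T ^ p`, `B = 2 ^ (p - 1) * b T ^ p`.
Then `z' = B * l * u ^ (p * γ) ≤ B * l * z ^ γ`, so `z ^ (1 - γ) - (1 - γ) * B * ∫₀ˢ l` has
nonpositive derivative and is nonincreasing (Bihari's argument for the power nonlinearity).
Since `z ^ (1 - γ)` need not be differentiable where `z` vanishes, this is first done with `A`
replaced by `A + ε`, and `ε → 0` afterwards.
-/

open MeasureTheory Set Filter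

namespace Real

theorem rpow_add_le_mul_rpow_add_rpow {a b p : ℝ} (ha : 0 ≤ a) (hb : 0 ≤ b) (hp : 1 ≤ p) :
    (a + b) ^ p ≤ 2 ^ (p - 1) * (a ^ p + b ^ p) := by
  lift a to NNReal using ha
  lift b to NNReal using hb
  exact_mod_cast NNReal.rpow_add_le_mul_rpow_add_rpow a b hp

theorem rpow_le_two_rpow_mul_of_le_add_mul_rpow_one_div {x a b I p : ℝ} (hp : 1 ≤ p)
    (hx : 0 ≤ x) (ha : 0 ≤ a) (hb : 0 ≤ b) (hI : 0 ≤ I) (h : x ≤ a + b * I ^ (1 / p)) :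
    x ^ p ≤ 2 ^ (p - 1) * (a ^ p + b ^ p * I) := by
  have hbI : (b * I ^ (1 / p)) ^ p = b ^ p * I := by
    rw [mul_rpow hb (by positivity), ← rpow_mul hI, one_div_mul_cancel (by positivity),
      rpow_one]
  calc x ^ p ≤ (a + b * I ^ (1 / p)) ^ p := by gcongr
    _ ≤ 2 ^ (p - 1) * (a ^ p + (b * I ^ (1 / p)) ^ p) :=
      rpow_add_le_mul_rpow_add_rpow ha (by positivity) hp
    _ = 2 ^ (p - 1) * (a ^ p + b ^ p * I) := by rw [hbI]

theorem le_mul_rpow_one_div_of_rpow_le {x c d q : ℝ} (hx : 0 ≤ x) (hc : 0 ≤ c) (hd : 0 ≤ d)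
    (hq : 0 < q) (h : x ^ q ≤ c ^ q * d) : x ≤ c * d ^ (1 / q) := by
  rw [one_div, ← rpow_rpow_inv hc hq.ne', ← mul_rpow (by positivity) hd]
  exact (le_rpow_inv_iff_of_pos hx (by positivity) hq).2 h

end Real

theorem intervalIntegral.integral_nonneg_of_forall_Ioc {f : ℝ → ℝ} {a b : ℝ} (hab : a ≤ b)
    (hf : ∀ x ∈ Ioc a b, 0 ≤ f x) : 0 ≤ ∫ x in a..b, f x := by
  rw [intervalIntegral.integral_of_le hab]
  exact setIntegral_nonneg measurableSet_Ioc hf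

section PowerBihari

variable {γ A B T : ℝ} {l w : ℝ → ℝ}

theorem integral_mul_nonneg_of_mem_Icc (hl_nonneg : ∀ s ∈ Ioc 0 T, 0 ≤ l s)
    (hw_nonneg : ∀ s ∈ Ioc 0 T, 0 ≤ w s) {s : ℝ} (hs : s ∈ Icc 0 T) :
    0 ≤ ∫ r in (0:ℝ)..s, l r * w r :=
  intervalIntegral.integral_nonneg_of_forall_Ioc hs.1 fun r hr =>
    mul_nonneg (hl_nonneg r ⟨hr.1, hr.2.trans hs.2⟩) (hw_nonneg r ⟨hr.1, hr.2.trans hs.2⟩)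

theorem power_bihari_of_pos (hγ : γ < 1) (hA : 0 < A) (hB : 0 ≤ B) (hT : 0 ≤ T)
    (hl_cont : ContinuousOn l (Ioo 0 T)) (hl_nonneg : ∀ s ∈ Ioc 0 T, 0 ≤ l s)
    (hl_int : IntervalIntegrable l volume 0 T)
    (hw_cont : ContinuousOn w (Icc 0 T)) (hw_nonneg : ∀ s ∈ Ioc 0 T, 0 ≤ w s)
    (hw : ∀ s ∈ Icc 0 T, w s ≤ (A + B * ∫ r in (0:ℝ)..s, l r * w r) ^ γ) :
    (A + B * ∫ s in (0:ℝ)..T, l s * w s) ^ (1 - γ) ≤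
      A ^ (1 - γ) + (1 - γ) * B * ∫ s in (0:ℝ)..T, l s := by
  set z : ℝ → ℝ := fun s => A + B * ∫ r in (0:ℝ)..s, l r * w r with hz
  set L : ℝ → ℝ := fun s => ∫ r in (0:ℝ)..s, l r with hL
  have hlw_int : IntervalIntegrable (fun r => l r * w r) volume 0 T :=
    hl_int.mul_continuousOn (by rwa [uIcc_of_le hT])
  have hz_pos : ∀ s ∈ Icc 0 T, 0 < z s := fun s hs =>
    add_pos_of_pos_of_nonneg hA <| mul_nonneg hB <|
      integral_mul_nonneg_of_mem_Icc hl_nonneg hw_nonneg hs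
  have hz_cont : ContinuousOn z (Icc 0 T) := by
    have := intervalIntegral.continuousOn_primitive_interval' hlw_int left_mem_uIcc
    rw [uIcc_of_le hT] at this
    exact continuousOn_const.add (continuousOn_const.mul this)
  have hL_cont : ContinuousOn L (Icc 0 T) := by
    have := intervalIntegral.continuousOn_primitive_interval' hl_int left_mem_uIcc
    rwa [uIcc_of_le hT] at this
  have hderiv : ∀ x ∈ Ioo 0 T, HasDerivAt (fun s => z s ^ (1 - γ) - (1 - γ) * B * L s)
      (B * (l x * w x) * (1 - γ) * z x ^ (1 - γ - 1) - (1 - γ) * B * l x) x := by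
    intro x hx
    have hsub : uIcc 0 x ⊆ uIcc 0 T := uIcc_subset_uIcc_left <| by
      rw [uIcc_of_le hT]; exact Ioo_subset_Icc_self hx
    have hlw_cont : ContinuousOn (fun r => l r * w r) (Ioo 0 T) :=
      hl_cont.mul (hw_cont.mono Ioo_subset_Icc_self)
    have hz' : HasDerivAt z (B * (l x * w x)) x :=
      ((intervalIntegral.integral_hasDerivAt_right (hlw_int.mono_set hsub)
        (hlw_cont.stronglyMeasurableAtFilter isOpen_Ioo x hx)
        (hlw_cont.continuousAt (isOpen_Ioo.mem_nhds hx))).const_mul B).const_add A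
    have hL' : HasDerivAt L (l x) x :=
      intervalIntegral.integral_hasDerivAt_right (hl_int.mono_set hsub)
        (hl_cont.stronglyMeasurableAtFilter isOpen_Ioo x hx)
        (hl_cont.continuousAt (isOpen_Ioo.mem_nhds hx))
    exact (hz'.rpow_const (Or.inl (hz_pos x (Ioo_subset_Icc_self hx)).ne')).sub
      (hL'.const_mul _)
  have hanti : AntitoneOn (fun s => z s ^ (1 - γ) - (1 - γ) * B * L s) (Icc 0 T) := by
    refine antitoneOn_of_hasDerivWithinAt_nonpos (convex_Icc 0 T)
      (f' := fun x => B * (l x * w x) * (1 - γ) * z x ^ (1 - γ - 1) - (1 - γ) * B * l x)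
      ((hz_cont.rpow_const fun x hx => Or.inl (hz_pos x hx).ne').sub
        (continuousOn_const.mul hL_cont)) ?_ ?_
    · rw [interior_Icc]
      exact fun x hx => (hderiv x hx).hasDerivWithinAt
    · rw [interior_Icc]
      intro x hx
      have hzx := hz_pos x (Ioo_subset_Icc_self hx)
      have hcancel : z x ^ γ * z x ^ (1 - γ - 1) = 1 := by
        rw [← Real.rpow_add hzx]; norm_num
      have hwx : w x ≤ z x ^ γ := hw x (Ioo_subset_Icc_self hx)
      have hlx : 0 ≤ l x := hl_nonneg x (Ioo_subset_Ioc_self hx)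
      have h1γ : 0 ≤ 1 - γ := by linarith
      calc B * (l x * w x) * (1 - γ) * z x ^ (1 - γ - 1) - (1 - γ) * B * l x
          ≤ B * (l x * z x ^ γ) * (1 - γ) * z x ^ (1 - γ - 1) - (1 - γ) * B * l x := by
            gcongr
        _ = 0 := by linear_combination (1 - γ) * B * l x * hcancel
  simpa [hz, hL] using hanti ⟨le_rfl, hT⟩ ⟨hT, le_rfl⟩ hT

theorem power_bihari (hγ₀ : 0 ≤ γ) (hγ₁ : γ < 1) (hA : 0 ≤ A) (hB : 0 ≤ B) (hT : 0 ≤ T)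
    (hl_cont : ContinuousOn l (Ioo 0 T)) (hl_nonneg : ∀ s ∈ Ioc 0 T, 0 ≤ l s)
    (hl_int : IntervalIntegrable l volume 0 T)
    (hw_cont : ContinuousOn w (Icc 0 T)) (hw_nonneg : ∀ s ∈ Ioc 0 T, 0 ≤ w s)
    (hw : ∀ s ∈ Icc 0 T, w s ≤ (A + B * ∫ r in (0:ℝ)..s, l r * w r) ^ γ) :
    (A + B * ∫ s in (0:ℝ)..T, l s * w s) ^ (1 - γ) ≤
      A ^ (1 - γ) + (1 - γ) * B * ∫ s in (0:ℝ)..T, l s := by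
  have hI := fun s (hs : s ∈ Icc 0 T) => integral_mul_nonneg_of_mem_Icc hl_nonneg hw_nonneg hs
  have h1γ : 0 < 1 - γ := by linarith
  refine le_of_forall_pos_le_add fun δ hδ => ?_
  set ε := δ ^ (1 - γ)⁻¹ with hε
  have hεδ : ε ^ (1 - γ) = δ := by
    rw [hε, ← Real.rpow_mul hδ.le, inv_mul_cancel₀ h1γ.ne', Real.rpow_one]
  have hε_pos : 0 < ε := by positivity
  have hbound := power_bihari_of_pos hγ₁ (add_pos_of_nonneg_of_pos hA hε_pos) hB hT hl_cont
    hl_nonneg hl_int hw_cont hw_nonneg fun s hs => (hw s hs).trans <| by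
      gcongr
      · exact add_nonneg hA (mul_nonneg hB (hI s hs))
      · linarith
  calc (A + B * ∫ s in (0:ℝ)..T, l s * w s) ^ (1 - γ)
      ≤ (A + ε + B * ∫ s in (0:ℝ)..T, l s * w s) ^ (1 - γ) := by
        gcongr
        · exact add_nonneg hA (mul_nonneg hB (hI T ⟨hT, le_rfl⟩))
        · linarith
    _ ≤ (A + ε) ^ (1 - γ) + (1 - γ) * B * ∫ s in (0:ℝ)..T, l s := hbound
    _ ≤ A ^ (1 - γ) + ε ^ (1 - γ) + (1 - γ) * B * ∫ s in (0:ℝ)..T, l s := by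
        gcongr
        exact Real.rpow_add_le_add_rpow hA hε_pos.le h1γ.le (by linarith)
    _ = A ^ (1 - γ) + (1 - γ) * B * (∫ s in (0:ℝ)..T, l s) + δ := by rw [hεδ]; ring

end PowerBihari

theorem rpow_le_two_rpow_mul_add_of_monotoneOn {p T : ℝ} {a b u I : ℝ → ℝ} (hp : 1 ≤ p)
    (ha_mono : MonotoneOn a (Icc 0 T)) (ha_nonneg : ∀ s ∈ Icc 0 T, 0 ≤ a s)
    (hb_mono : MonotoneOn b (Icc 0 T)) (hb_nonneg : ∀ s ∈ Icc 0 T, 0 ≤ b s)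
    (hu_nonneg : ∀ s ∈ Icc 0 T, 0 ≤ u s) (hI : ∀ s ∈ Icc 0 T, 0 ≤ I s)
    (hu : ∀ s ∈ Icc 0 T, u s ≤ a s + b s * I s ^ (1 / p)) :
    ∀ s ∈ Icc 0 T, u s ^ p ≤ 2 ^ (p - 1) * a T ^ p + 2 ^ (p - 1) * b T ^ p * I s := by
  intro s hs
  have hT : T ∈ Icc 0 T := ⟨hs.1.trans hs.2, le_rfl⟩
  have has := ha_nonneg s hs
  have hbs := hb_nonneg s hs
  have hIs := hI s hs
  calc u s ^ p ≤ 2 ^ (p - 1) * (a s ^ p + b s ^ p * I s) :=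
        Real.rpow_le_two_rpow_mul_of_le_add_mul_rpow_one_div hp (hu_nonneg s hs) has hbs hIs
          (hu s hs)
    _ ≤ 2 ^ (p - 1) * (a T ^ p + b T ^ p * I s) := by
        gcongr
        exacts [ha_mono hs hT hs.2, hb_mono hs hT hs.2]
    _ = 2 ^ (p - 1) * a T ^ p + 2 ^ (p - 1) * b T ^ p * I s := by ring

theorem le_two_rpow_mul_rpow_of_rpow_rpow_le {p γ x α β L : ℝ} (hp : 0 < p) (hγ : γ < 1)
    (hx : 0 ≤ x) (hα : 0 ≤ α) (hβ : 0 ≤ β) (hL : 0 ≤ L)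
    (h : (x ^ p) ^ (1 - γ) ≤
      (2 ^ (p - 1) * α ^ p) ^ (1 - γ) + (1 - γ) * (2 ^ (p - 1) * β ^ p) * L) :
    x ≤ 2 ^ (1 - 1 / p) *
      (α ^ (p * (1 - γ)) + (1 - γ) * 2 ^ ((p - 1) * γ) * β ^ p * L) ^ (1 / (p * (1 - γ))) := by
  have h1γ : 0 < 1 - γ := by linarith
  refine Real.le_mul_rpow_one_div_of_rpow_le hx (by positivity) (by positivity)
    (by positivity) ?_
  have h2 : (2:ℝ) ^ (p - 1) = 2 ^ ((p - 1) * (1 - γ)) * 2 ^ ((p - 1) * γ) := by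
    rw [← Real.rpow_add two_pos]; ring_nf
  have h2' : ((2:ℝ) ^ (1 - 1 / p)) ^ (p * (1 - γ)) = 2 ^ ((p - 1) * (1 - γ)) := by
    rw [← Real.rpow_mul two_pos.le]; congr 1; field_simp
  rw [Real.rpow_mul hx, h2']
  convert h using 1
  rw [Real.mul_rpow (by positivity) (by positivity), ← Real.rpow_mul two_pos.le,
    ← Real.rpow_mul hα, h2]
  ring

theorem stmt2_general (p γ : ℝ) (hp : 1 ≤ p) (hγ : γ ∈ Ioo (0:ℝ) 1)
    (a b l u : ℝ → ℝ)
    (ha_mono : MonotoneOn a (Ici 0))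
    (ha_nonneg : ∀ t ∈ Ici (0:ℝ), 0 ≤ a t)
    (hb_mono : MonotoneOn b (Ici 0))
    (hb_nonneg : ∀ t ∈ Ici (0:ℝ), 0 ≤ b t)
    (hl_cont : ContinuousOn l (Ioi 0)) (hl_nonneg : ∀ t ∈ Ioi (0:ℝ), 0 ≤ l t)
    (hl_int : ∀ t : ℝ, 0 ≤ t → IntervalIntegrable l volume 0 t)
    (hu_cont : ContinuousOn u (Ici 0)) (hu_nonneg : ∀ t ∈ Ici (0:ℝ), 0 ≤ u t)
    (hu : ∀ t ∈ Ici (0:ℝ),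
      u t ≤ a t + b t * (∫ s in (0:ℝ)..t, l s * u s ^ (p * γ)) ^ (1/p)) :
    ∀ t ∈ Ici (0:ℝ),
      u t ≤ (2:ℝ) ^ (1 - 1/p) *
        (a t ^ (p * (1 - γ)) +
          (1 - γ) * (2:ℝ) ^ ((p - 1) * γ) * b t ^ p * ∫ s in (0:ℝ)..t, l s)
        ^ (1 / (p * (1 - γ))) := by
  obtain ⟨hγ₀, hγ₁⟩ := hγ
  intro T (hT : 0 ≤ T)
  have hl_nonneg' : ∀ s ∈ Ioc 0 T, 0 ≤ l s := fun s hs => hl_nonneg s hs.1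
  have hw_nonneg : ∀ s ∈ Ioc 0 T, 0 ≤ u s ^ (p * γ) := fun s hs =>
    Real.rpow_nonneg (hu_nonneg s hs.1.le) _
  have hup := rpow_le_two_rpow_mul_add_of_monotoneOn hp (ha_mono.mono Icc_subset_Ici_self)
    (fun s hs => ha_nonneg s hs.1) (hb_mono.mono Icc_subset_Ici_self)
    (fun s hs => hb_nonneg s hs.1) (fun s hs => hu_nonneg s hs.1)
    (fun s hs => integral_mul_nonneg_of_mem_Icc hl_nonneg' hw_nonneg hs) fun s hs => hu s hs.1
  have hbihari := power_bihari (A := 2 ^ (p - 1) * a T ^ p) (B := 2 ^ (p - 1) * b T ^ p)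
    hγ₀.le hγ₁ (by have := ha_nonneg T hT; positivity)
    (by have := hb_nonneg T hT; positivity) hT (hl_cont.mono Ioo_subset_Ioi_self) hl_nonneg'
    (hl_int T hT)
    ((hu_cont.mono Icc_subset_Ici_self).rpow_const fun _ _ => Or.inr (by positivity))
    hw_nonneg fun s hs => by
      rw [Real.rpow_mul (hu_nonneg s hs.1)]
      exact Real.rpow_le_rpow (Real.rpow_nonneg (hu_nonneg s hs.1) _) (hup s hs) hγ₀.le
  refine le_two_rpow_mul_rpow_of_rpow_rpow_le (by linarith) hγ₁ (hu_nonneg T hT)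
    (ha_nonneg T hT) (hb_nonneg T hT)
    (intervalIntegral.integral_nonneg_of_forall_Ioc hT hl_nonneg') (hbihari.trans' ?_)
  exact Real.rpow_le_rpow (Real.rpow_nonneg (hu_nonneg T hT) _) (hup T ⟨hT, le_rfl⟩)
    (by linarith)

/-- Corollary 2.2, case 0 < γ < 1:
`u(t) ≤ a(t) + b(t)(∫₀ᵗ l(s) u(s)^{pγ} ds)^{1/p}` implies
`u(t) ≤ 2^{1-1/p} (a(t)^{p(1-γ)} + (1-γ) 2^{(p-1)γ} b(t)^p ∫₀ᵗ l(s) ds)^{1/(p(1-γ))}`. -/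
theorem stmt2 (p γ : ℝ) (hp : 1 ≤ p) (hγ : γ ∈ Ioo (0:ℝ) 1)
    (a b l u : ℝ → ℝ)
    (ha_cont : ContinuousOn a (Ici 0)) (ha_mono : MonotoneOn a (Ici 0))
    (ha_nonneg : ∀ t ∈ Ici (0:ℝ), 0 ≤ a t)
    (hb_cont : ContinuousOn b (Ici 0)) (hb_mono : MonotoneOn b (Ici 0))
    (hb_nonneg : ∀ t ∈ Ici (0:ℝ), 0 ≤ b t)
    (hl_cont : ContinuousOn l (Ioi 0)) (hl_nonneg : ∀ t ∈ Ioi (0:ℝ), 0 ≤ l t)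
    (hl_int : ∀ t : ℝ, 0 ≤ t → IntervalIntegrable l volume 0 t)
    (hu_cont : ContinuousOn u (Ici 0)) (hu_nonneg : ∀ t ∈ Ici (0:ℝ), 0 ≤ u t)
    (hu : ∀ t ∈ Ici (0:ℝ),
      u t ≤ a t + b t * (∫ s in (0:ℝ)..t, l s * u s ^ (p * γ)) ^ (1/p)) :
    ∀ t ∈ Ici (0:ℝ),
      u t ≤ (2:ℝ) ^ (1 - 1/p) *
        (a t ^ (p * (1 - γ)) +
          (1 - γ) * (2:ℝ) ^ ((p - 1) * γ) * b t ^ p * ∫ s in (0:ℝ)..t, l s)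
        ^ (1 / (p * (1 - γ))) :=
  stmt2_general p γ hp hγ a b l u ha_mono ha_nonneg hb_mono hb_nonneg hl_cont hl_nonneg hl_int
    hu_cont hu_nonneg hu
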